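/- arXiv:2206.09147 — 3 statements merged into one kernel-verified Lean document; each statement's English description precedes it below -/
import Mathlib

section
/- Let 0 < τ₂ < τ₁ be reals, let x be a real number, let k ≥ 1 and let r₁, …, r_k be natural numbers with r_j ≥ 1 for every j. Set s_k = r₁ + ⋯ + r_k and m_j = r_j + r_{j+1} + ⋯ + r_k (so m_{k+1} = 0). Then the deformed multinomial coefficients satisfy the recurrence M(x; r₁,…,r_k) = τ₁^{s_k} · M(x−1; r₁,…,r_k) + Σ_{j=1}^{k} τ₁^{m_{j+1}} · τ₂^{x−m_j} · M(x−1; r₁,…,r_{j−1}, r_j−1, r_{j+1},…,r_k), where τ₂^{x−m_j} and τ₁^{m_{j+1}} are real powers. (This is the first recurrence of the paper's Proposition on multinomial coefficients, with the factor τ₁^{m_{j+1}} included so that the identity holds for all k.) -/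
open Finset

noncomputable def dnum (τ₁ τ₂ x : ℝ) : ℝ := (τ₁ ^ x - τ₂ ^ x) / (τ₁ - τ₂)

noncomputable def dfac (τ₁ τ₂ : ℝ) (r : ℕ) : ℝ :=
  ∏ j ∈ Finset.range r, dnum τ₁ τ₂ ((j : ℝ) + 1)

noncomputable def dfall (τ₁ τ₂ x : ℝ) (r : ℕ) : ℝ :=
  ∏ i ∈ Finset.range r, dnum τ₁ τ₂ (x - (i : ℝ))

noncomputable def dbinom (τ₁ τ₂ x : ℝ) (r : ℕ) : ℝ := dfall τ₁ τ₂ x r / dfac τ₁ τ₂ r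

noncomputable def dmulti (τ₁ τ₂ x : ℝ) {k : ℕ} (r : Fin k → ℕ) : ℝ :=
  dfall τ₁ τ₂ x (∑ j, r j) / ∏ j, dfac τ₁ τ₂ (r j)

/-!
Multiplying through by `∏ [r_j]!` and cancelling the common factor `[x-1]_{s-1}`, the recurrence
becomes the scalar identity `[x] = τ₁^s [x-s] + Σ_j τ₁^{m_{j+1}} τ₂^{x-m_j} [r_j]`. This follows by
peeling off the blocks `r_1, …, r_k` one at a time with `[a+b] = τ₁^a [b] + τ₂^b [a]`.
-/

section

variable {τ₁ τ₂ : ℝ}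

lemma dnum_pos (hτ₂ : 0 ≤ τ₂) (hττ : τ₂ < τ₁) {y : ℝ} (hy : 0 < y) : 0 < dnum τ₁ τ₂ y :=
  div_pos (sub_pos.2 (Real.rpow_lt_rpow hτ₂ hττ hy)) (sub_pos.2 hττ)

lemma dfac_pos (hτ₂ : 0 ≤ τ₂) (hττ : τ₂ < τ₁) (r : ℕ) : 0 < dfac τ₁ τ₂ r :=
  prod_pos fun _ _ => dnum_pos hτ₂ hττ (by positivity)

lemma dnum_add (hτ₁ : 0 < τ₁) (hτ₂ : 0 < τ₂) (a b : ℝ) :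
    dnum τ₁ τ₂ (a + b) = τ₁ ^ a * dnum τ₁ τ₂ b + τ₂ ^ b * dnum τ₁ τ₂ a := by
  simp only [dnum, Real.rpow_add hτ₁, Real.rpow_add hτ₂]
  ring

lemma dnum_eq_sum_blocks (hτ₁ : 0 < τ₁) (hτ₂ : 0 < τ₂) (x : ℝ) {k : ℕ} (r : Fin k → ℝ) :
    dnum τ₁ τ₂ x = τ₁ ^ (∑ j, r j) * dnum τ₁ τ₂ (x - ∑ j, r j) +
      ∑ j, τ₁ ^ (∑ i ∈ Ioi j, r i) * τ₂ ^ (x - ∑ i ∈ Ici j, r i) * dnum τ₁ τ₂ (r j) := by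
  induction k with
  | zero => simp
  | succ k ih =>
    rw [Fin.sum_univ_succ (fun j => τ₁ ^ (∑ i ∈ Ioi j, r i) * τ₂ ^ (x - ∑ i ∈ Ici j, r i) *
      dnum τ₁ τ₂ (r j))]
    simp only [Fin.sum_Ioi_zero, Fin.sum_Ioi_succ, Fin.sum_Ici_succ,
      show Ici (0 : Fin (k + 1)) = univ from Ici_bot]
    rw [Fin.sum_univ_succ r]
    set S := ∑ i : Fin k, r i.succ
    have hhead := dnum_add hτ₁ hτ₂ (r 0) (x - (r 0 + S))
    rw [show r 0 + (x - (r 0 + S)) = x - S by ring] at hhead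
    rw [Real.rpow_add hτ₁]
    linear_combination ih (fun i => r i.succ) + τ₁ ^ S * hhead

lemma dfall_succ' (x : ℝ) (n : ℕ) :
    dfall τ₁ τ₂ x (n + 1) = dnum τ₁ τ₂ x * dfall τ₁ τ₂ (x - 1) n := by
  simp only [dfall, prod_range_succ', Nat.cast_add, Nat.cast_one, Nat.cast_zero, sub_zero,
    sub_add_eq_sub_sub_swap]
  ring

lemma dfall_succ (x : ℝ) (n : ℕ) :
    dfall τ₁ τ₂ x (n + 1) = dfall τ₁ τ₂ x n * dnum τ₁ τ₂ (x - n) :=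
  prod_range_succ _ _

lemma dfac_eq_dfac_pred_mul {r : ℕ} (hr : r ≠ 0) :
    dfac τ₁ τ₂ r = dfac τ₁ τ₂ (r - 1) * dnum τ₁ τ₂ r := by
  obtain ⟨n, rfl⟩ := Nat.exists_eq_succ_of_ne_zero hr
  simp [dfac, prod_range_succ]

lemma sum_update_pred_add_one {ι : Type*} [Fintype ι] [DecidableEq ι] (r : ι → ℕ) {j : ι}
    (hj : r j ≠ 0) : ∑ i, Function.update r j (r j - 1) i + 1 = ∑ i, r i := by
  rw [sum_update_of_mem (mem_univ j), sum_eq_add_sum_sdiff_singleton_of_mem (mem_univ j)]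
  omega

lemma prod_dfac_update_pred_mul {ι : Type*} [Fintype ι] [DecidableEq ι] (r : ι → ℕ) {j : ι}
    (hj : r j ≠ 0) :
    (∏ i, dfac τ₁ τ₂ (Function.update r j (r j - 1) i)) * dnum τ₁ τ₂ (r j) =
      ∏ i, dfac τ₁ τ₂ (r i) := by
  rw [prod_eq_mul_prod_sdiff_singleton_of_mem (mem_univ j), Function.update_self,
    prod_eq_mul_prod_sdiff_singleton_of_mem (mem_univ j) (fun i => dfac τ₁ τ₂ (r i)),
    dfac_eq_dfac_pred_mul hj,
    prod_congr rfl fun i hi => by rw [Function.update_of_ne (by simpa using hi)]]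
  ring

lemma dmulti_mul_prod_dfac (hτ₂ : 0 ≤ τ₂) (hττ : τ₂ < τ₁) (x : ℝ) {k : ℕ} (r : Fin k → ℕ) :
    dmulti τ₁ τ₂ x r * ∏ j, dfac τ₁ τ₂ (r j) = dfall τ₁ τ₂ x (∑ j, r j) :=
  div_mul_cancel₀ _ (prod_pos fun j _ => dfac_pos hτ₂ hττ (r j)).ne'

end

theorem deformed_multinomial_recurrence_first_general
    (τ₁ τ₂ : ℝ) (hτ₂ : 0 < τ₂) (hττ : τ₂ < τ₁) (x : ℝ)
    (k : ℕ) (r : Fin k → ℕ) (hr : ∀ j, 1 ≤ r j) :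
    dmulti τ₁ τ₂ x r =
      τ₁ ^ (((∑ j, r j : ℕ) : ℝ)) * dmulti τ₁ τ₂ (x - 1) r +
        ∑ j : Fin k,
          τ₁ ^ (((∑ i ∈ Finset.Ioi j, r i : ℕ) : ℝ)) *
            τ₂ ^ (x - ((∑ i ∈ Finset.Ici j, r i : ℕ) : ℝ)) *
            dmulti τ₁ τ₂ (x - 1) (Function.update r j (r j - 1)) := by
  obtain _ | k := k
  · simp [dmulti, dfall]
  obtain ⟨n, hn⟩ : ∃ n, ∑ j, r j = n + 1 :=
    Nat.exists_eq_add_one.2 ((hr 0).trans (single_le_sum (fun _ _ => Nat.zero_le _) (mem_univ 0)))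
  have hD : ∏ j, dfac τ₁ τ₂ (r j) ≠ 0 := (prod_pos fun j _ => dfac_pos hτ₂.le hττ (r j)).ne'
  have hx : dmulti τ₁ τ₂ x r * ∏ j, dfac τ₁ τ₂ (r j) = dnum τ₁ τ₂ x * dfall τ₁ τ₂ (x - 1) n := by
    rw [dmulti_mul_prod_dfac hτ₂.le hττ, hn, dfall_succ']
  have hx_sub : dmulti τ₁ τ₂ (x - 1) r * ∏ j, dfac τ₁ τ₂ (r j) =
      dnum τ₁ τ₂ (x - (∑ j, r j : ℕ)) * dfall τ₁ τ₂ (x - 1) n := by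
    rw [dmulti_mul_prod_dfac hτ₂.le hττ, hn, dfall_succ, mul_comm]
    congr 2
    push_cast
    ring
  have hx_update : ∀ j, dmulti τ₁ τ₂ (x - 1) (Function.update r j (r j - 1)) *
      ∏ j, dfac τ₁ τ₂ (r j) = dnum τ₁ τ₂ (r j) * dfall τ₁ τ₂ (x - 1) n := fun j => by
    have hj : r j ≠ 0 := Nat.one_le_iff_ne_zero.1 (hr j)
    have hsum : ∑ i, Function.update r j (r j - 1) i = n := by
      have := sum_update_pred_add_one r hj
      omega
    rw [← prod_dfac_update_pred_mul r hj, ← mul_assoc, dmulti_mul_prod_dfac hτ₂.le hττ, hsum,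
      mul_comm]
  rw [← mul_left_inj' hD, add_mul, sum_mul]
  simp only [mul_assoc, hx, hx_sub, hx_update]
  rw [dnum_eq_sum_blocks (hτ₂.trans hττ) hτ₂ x (fun j => (r j : ℝ)), add_mul, sum_mul]
  push_cast
  simp only [mul_assoc]

/-- First recurrence for the deformed multinomial coefficients:
`M(x; r₁,…,r_k) = τ₁^{s_k} M(x−1; r₁,…,r_k)
  + Σ_j τ₁^{m_{j+1}} τ₂^{x−m_j} M(x−1; …, r_j−1, …)`,
where `s_k = r₁+⋯+r_k` and `m_j = r_j+⋯+r_k`. -/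
theorem deformed_multinomial_recurrence_first
    (τ₁ τ₂ : ℝ) (hτ₂ : 0 < τ₂) (hττ : τ₂ < τ₁) (x : ℝ)
    (k : ℕ) (hk : 1 ≤ k) (r : Fin k → ℕ) (hr : ∀ j, 1 ≤ r j) :
    dmulti τ₁ τ₂ x r =
      τ₁ ^ (((∑ j, r j : ℕ) : ℝ)) * dmulti τ₁ τ₂ (x - 1) r +
        ∑ j : Fin k,
          τ₁ ^ (((∑ i ∈ Finset.Ioi j, r i : ℕ) : ℝ)) *
            τ₂ ^ (x - ((∑ i ∈ Finset.Ici j, r i : ℕ) : ℝ)) *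
            dmulti τ₁ τ₂ (x - 1) (Function.update r j (r j - 1)) :=
  deformed_multinomial_recurrence_first_general τ₁ τ₂ hτ₂ hττ x k r hr
end

section
/- Let 0 < τ₂ < τ₁ be reals, let x be a real number, let k ≥ 1 and let r₁, …, r_k be natural numbers. Set m_j = r_j + r_{j+1} + ⋯ + r_k and s_j = r₁ + ⋯ + r_j. Writing M_σ for the deformed multinomial coefficient formed from the pair σ = (τ₁^{−1}, τ₂^{−1}), one has M_σ(x; r₁,…,r_k) = (τ₁τ₂)^{−Σ_{j=1}^{k} r_j(x − m_j)} · M(x; r₁,…,r_k), and moreover Σ_{j=1}^{k} r_j(x − m_j) = Σ_{j=1}^{k} r_j(x − s_j), so the same identity holds with s_j in place of m_j. -/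
/-!
Inverting both parameters rescales every deformed number by a power of `τ₁τ₂`:
`[y]_σ = (τ₁τ₂)^(1-y) [y]`. Multiplying over the factors of `[x]_S` (with `S = Σ r_j`) and of
the `[r_j]! = [r_j]_{r_j}` gives `M_σ = (τ₁τ₂)^e M` with `e = (S² + Σ r_j²)/2 - S x`.
The combinatorial input is `Σ r_j m_j = Σ r_j s_j = (S² + Σ r_j²)/2`: the first two sums are
transposes of the same double sum, and `m_j + s_j = S + r_j`.
-/

open Finset

section PrefixSuffixSums

variable {ι R : Type*} [Fintype ι] [LinearOrder ι] [LocallyFiniteOrderTop ι]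
  [LocallyFiniteOrderBot ι]

theorem sum_mul_sum_Ici_eq_sum_mul_sum_Iic [CommSemiring R] (f : ι → R) :
    ∑ j, f j * ∑ i ∈ Ici j, f i = ∑ j, f j * ∑ i ∈ Iic j, f i := by
  simp_rw [mul_sum]
  rw [sum_comm' (t' := univ) (s' := Iic) (by simp)]
  exact sum_congr rfl fun _ _ => sum_congr rfl fun _ _ => mul_comm _ _

theorem sum_Ici_add_sum_Iic [AddCommMonoid R] (f : ι → R) (j : ι) :
    ∑ i ∈ Ici j, f i + ∑ i ∈ Iic j, f i = ∑ i, f i + f j := by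
  have hunion : Ici j ∪ Iic j = univ := by ext i; simp [le_total j i]
  have hinter : Ici j ∩ Iic j = {j} := by ext i; simp [le_antisymm_iff, and_comm]
  rw [← sum_union_inter, hunion, hinter, sum_singleton]

theorem two_mul_sum_mul_sum_Ici [CommSemiring R] (f : ι → R) :
    2 * ∑ j, f j * ∑ i ∈ Ici j, f i = (∑ j, f j) ^ 2 + ∑ j, f j ^ 2 := by
  calc 2 * ∑ j, f j * ∑ i ∈ Ici j, f i
      = ∑ j, f j * (∑ i ∈ Ici j, f i + ∑ i ∈ Iic j, f i) := by
        rw [two_mul]; nth_rw 2 [sum_mul_sum_Ici_eq_sum_mul_sum_Iic]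
        simp only [mul_add, sum_add_distrib]
    _ = (∑ j, f j) ^ 2 + ∑ j, f j ^ 2 := by
        simp only [sum_Ici_add_sum_Iic, mul_add, sum_add_distrib, ← sum_mul, sq]

end PrefixSuffixSums

theorem dnum_inv_inv {τ₁ τ₂ : ℝ} (hτ₁ : 0 < τ₁) (hτ₂ : 0 < τ₂) (y : ℝ) :
    dnum τ₁⁻¹ τ₂⁻¹ y = (τ₁ * τ₂) ^ (1 - y) * dnum τ₁ τ₂ y := by
  have h₁ := (Real.rpow_pos_of_pos hτ₁ y).ne'
  have h₂ := (Real.rpow_pos_of_pos hτ₂ y).ne'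
  rw [dnum, dnum, Real.inv_rpow hτ₁.le, Real.inv_rpow hτ₂.le, inv_sub_inv h₁ h₂,
    inv_sub_inv hτ₁.ne' hτ₂.ne', Real.rpow_sub (mul_pos hτ₁ hτ₂), Real.rpow_one,
    Real.mul_rpow hτ₁.le hτ₂.le, ← neg_sub (τ₁ ^ y), ← neg_sub τ₁, neg_div, neg_div,
    neg_div, div_neg, neg_neg, div_div_div_eq, div_mul_div_comm, mul_comm (τ₁ * τ₂)]

theorem sum_range_one_sub_sub (x : ℝ) (n : ℕ) :
    ∑ i ∈ range n, (1 - (x - i)) = n * (n + 1) / 2 - n * x := by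
  induction n with
  | zero => simp
  | succ n ih => rw [sum_range_succ, ih]; push_cast; ring

theorem dfall_inv_inv {τ₁ τ₂ : ℝ} (hτ₁ : 0 < τ₁) (hτ₂ : 0 < τ₂) (x : ℝ) (n : ℕ) :
    dfall τ₁⁻¹ τ₂⁻¹ x n = (τ₁ * τ₂) ^ (n * (n + 1) / 2 - n * x : ℝ) * dfall τ₁ τ₂ x n := by
  rw [dfall, dfall, ← sum_range_one_sub_sub, Real.rpow_sum_of_pos (mul_pos hτ₁ hτ₂),
    ← prod_mul_distrib]
  exact prod_congr rfl fun i _ => dnum_inv_inv hτ₁ hτ₂ _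

theorem dfac_eq_dfall (τ₁ τ₂ : ℝ) (n : ℕ) : dfac τ₁ τ₂ n = dfall τ₁ τ₂ n n := by
  rw [dfac, dfall, ← prod_range_reflect]
  refine prod_congr rfl fun j hj => ?_
  have hj : j < n := mem_range.mp hj
  rw [Nat.cast_sub (by omega), Nat.cast_sub (by omega), Nat.cast_one]
  congr 1
  ring

theorem dfac_inv_inv {τ₁ τ₂ : ℝ} (hτ₁ : 0 < τ₁) (hτ₂ : 0 < τ₂) (n : ℕ) :
    dfac τ₁⁻¹ τ₂⁻¹ n = (τ₁ * τ₂) ^ (-(n * (n - 1) / 2) : ℝ) * dfac τ₁ τ₂ n := by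
  rw [dfac_eq_dfall, dfac_eq_dfall, dfall_inv_inv hτ₁ hτ₂]
  congr 2
  ring

theorem dmulti_inv_inv {τ₁ τ₂ : ℝ} (hτ₁ : 0 < τ₁) (hτ₂ : 0 < τ₂) (x : ℝ) {k : ℕ}
    (r : Fin k → ℕ) :
    dmulti τ₁⁻¹ τ₂⁻¹ x r =
      (τ₁ * τ₂) ^ (((∑ j, (r j : ℝ)) ^ 2 + ∑ j, (r j : ℝ) ^ 2) / 2 - (∑ j, (r j : ℝ)) * x) *
        dmulti τ₁ τ₂ x r := by
  have hP := mul_pos hτ₁ hτ₂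
  rw [dmulti, dmulti, dfall_inv_inv hτ₁ hτ₂]
  simp only [dfac_inv_inv hτ₁ hτ₂, prod_mul_distrib, ← Real.rpow_sum_of_pos hP]
  rw [mul_div_mul_comm, ← Real.rpow_sub hP]
  congr 2
  push_cast
  simp only [sum_neg_distrib, ← sum_div, mul_sub, sum_sub_distrib, mul_one, sq]
  ring

theorem deformed_multinomial_inverse_parameters_general
    (τ₁ τ₂ : ℝ) (hτ₂ : 0 < τ₂) (hττ : τ₂ < τ₁) (x : ℝ)
    (k : ℕ) (r : Fin k → ℕ) :
    dmulti τ₁⁻¹ τ₂⁻¹ x r =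
        (τ₁ * τ₂) ^ (-(∑ j : Fin k, (r j : ℝ) *
              (x - ((∑ i ∈ Finset.Ici j, r i : ℕ) : ℝ)))) * dmulti τ₁ τ₂ x r ∧
      (∑ j : Fin k, (r j : ℝ) * (x - ((∑ i ∈ Finset.Ici j, r i : ℕ) : ℝ))) =
        (∑ j : Fin k, (r j : ℝ) * (x - ((∑ i ∈ Finset.Iic j, r i : ℕ) : ℝ))) ∧
      dmulti τ₁⁻¹ τ₂⁻¹ x r =
        (τ₁ * τ₂) ^ (-(∑ j : Fin k, (r j : ℝ) *
              (x - ((∑ i ∈ Finset.Iic j, r i : ℕ) : ℝ)))) * dmulti τ₁ τ₂ x r := by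
  have hexp : -(∑ j : Fin k, (r j : ℝ) * (x - ((∑ i ∈ Ici j, r i : ℕ) : ℝ))) =
      ((∑ j, (r j : ℝ)) ^ 2 + ∑ j, (r j : ℝ) ^ 2) / 2 - (∑ j, (r j : ℝ)) * x := by
    have htwo := two_mul_sum_mul_sum_Ici fun j => (r j : ℝ)
    push_cast
    simp only [mul_sub, sum_sub_distrib, ← sum_mul]
    linarith
  have hswap : (∑ j : Fin k, (r j : ℝ) * (x - ((∑ i ∈ Ici j, r i : ℕ) : ℝ))) =
      ∑ j : Fin k, (r j : ℝ) * (x - ((∑ i ∈ Iic j, r i : ℕ) : ℝ)) := by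
    push_cast
    simp only [mul_sub, sum_sub_distrib, sum_mul_sum_Ici_eq_sum_mul_sum_Iic]
  have hinv := dmulti_inv_inv (hτ₂.trans hττ) hτ₂ x r
  exact ⟨hexp ▸ hinv, hswap, hswap ▸ hexp ▸ hinv⟩

/-- Inversion formula for the deformed multinomial coefficients:
`M_{(τ₁⁻¹,τ₂⁻¹)}(x; r₁,…,r_k) = (τ₁τ₂)^{−Σ_j r_j(x−m_j)} M(x; r₁,…,r_k)`,
the exponent sums with `m_j = r_j+⋯+r_k` and with `s_j = r₁+⋯+r_j` agree,
and hence the same identity holds with `s_j` in place of `m_j`. -/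
theorem deformed_multinomial_inverse_parameters
    (τ₁ τ₂ : ℝ) (hτ₂ : 0 < τ₂) (hττ : τ₂ < τ₁) (x : ℝ)
    (k : ℕ) (hk : 1 ≤ k) (r : Fin k → ℕ) :
    dmulti τ₁⁻¹ τ₂⁻¹ x r =
        (τ₁ * τ₂) ^ (-(∑ j : Fin k, (r j : ℝ) *
              (x - ((∑ i ∈ Finset.Ici j, r i : ℕ) : ℝ)))) * dmulti τ₁ τ₂ x r ∧
      (∑ j : Fin k, (r j : ℝ) * (x - ((∑ i ∈ Finset.Ici j, r i : ℕ) : ℝ))) =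
        (∑ j : Fin k, (r j : ℝ) * (x - ((∑ i ∈ Finset.Iic j, r i : ℕ) : ℝ))) ∧
      dmulti τ₁⁻¹ τ₂⁻¹ x r =
        (τ₁ * τ₂) ^ (-(∑ j : Fin k, (r j : ℝ) *
              (x - ((∑ i ∈ Finset.Iic j, r i : ℕ) : ℝ)))) * dmulti τ₁ τ₂ x r :=
  deformed_multinomial_inverse_parameters_general τ₁ τ₂ hτ₂ hττ x k r
end

section
/- Multivariate deformed Cauchy formula in rising-binomial form: let 0 < τ₂ < τ₁ be reals, let n, k be naturals with k ≥ 1, and let x₁, …, x_{k+1} be real numbers. Then C(x₁ + ⋯ + x_{k+1} + n − 1, n) = Σ τ₁^{Σ_{j=1}^{k} x_j(n − s_j)} · τ₂^{Σ_{j=1}^{k} r_j z_j} · ∏_{j=1}^{k+1} C(x_j + r_j − 1, r_j), where the sum runs over all tuples (r₁,…,r_k) of naturals with r₁ + ⋯ + r_k ≤ n, and where s_j = r₁ + ⋯ + r_j, r_{k+1} = n − s_k, and z_j = x_{j+1} + ⋯ + x_{k+1}. -/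
open Finset

/-!
Put `q = τ₂ / τ₁ ∈ (0, 1)`. Then `[z] = τ₁ ^ z (1 - q ^ z) / (τ₁ - τ₂)`, so
`C(x + r - 1, r) = τ₁ ^ (r (x - 1)) [x + r - 1 choose r]_q` with the Gaussian binomial
`[x + r - 1 choose r]_q = (q ^ x; q)_r / (q; q)_r`. After this substitution the powers of `τ₁`
cancel, and what remains is the multivariate q-Vandermonde identity
`[Σ x + n - 1 choose n]_q = Σ_ρ q ^ (Σ_j ρ_j z_j) Π_j [x_j + ρ_j - 1 choose ρ_j]_q` over the
compositions `ρ` of `n` into `k + 1` parts. It follows by induction on `k` from the case of two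
parts, which q-Pascal gives by induction when `x` is a natural number; for real `x` both sides are
polynomials in `q ^ x` that agree at the infinitely many points `q ^ m`.
-/

noncomputable def qPoch (q x : ℝ) (r : ℕ) : ℝ := ∏ i ∈ range r, (1 - q ^ (x + i))

noncomputable def qRisingChoose (q x : ℝ) (r : ℕ) : ℝ := qPoch q x r / qPoch q 1 r

lemma qPoch_succ (q x : ℝ) (r : ℕ) : qPoch q x (r + 1) = qPoch q x r * (1 - q ^ (x + r)) :=
  prod_range_succ _ _

lemma qPoch_succ' (q x : ℝ) (r : ℕ) : qPoch q x (r + 1) = (1 - q ^ x) * qPoch q (x + 1) r := by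
  rw [qPoch, prod_range_succ', mul_comm, Nat.cast_zero, add_zero, qPoch]
  congr 1
  refine prod_congr rfl fun i _ => ?_
  push_cast
  ring_nf

lemma qPoch_pos {q x : ℝ} (hq₀ : 0 < q) (hq₁ : q < 1) (hx : 0 < x) (r : ℕ) : 0 < qPoch q x r :=
  prod_pos fun _ _ => sub_pos.2 (Real.rpow_lt_one hq₀.le hq₁ (by positivity))

@[simp]
lemma qRisingChoose_zero_right (q x : ℝ) : qRisingChoose q x 0 = 1 := by
  simp [qRisingChoose, qPoch]

lemma qRisingChoose_zero_succ (q : ℝ) (r : ℕ) : qRisingChoose q 0 (r + 1) = 0 := by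
  simp [qRisingChoose, qPoch_succ']

lemma qRisingChoose_succ_succ {q : ℝ} (hq₀ : 0 < q) (hq₁ : q < 1) (x : ℝ) (r : ℕ) :
    qRisingChoose q (x + 1) (r + 1) =
      qRisingChoose q x (r + 1) + q ^ x * qRisingChoose q (x + 1) r := by
  have hD := qPoch_pos hq₀ hq₁ one_pos r
  have hlast : 1 - q ^ (1 + r : ℝ) ≠ 0 :=
    (sub_pos.2 (Real.rpow_lt_one hq₀.le hq₁ (by positivity))).ne'
  have hsplit : q ^ (x + 1 + r) = q ^ x * q ^ (1 + r : ℝ) := by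
    rw [← Real.rpow_add hq₀, add_assoc]
  simp only [qRisingChoose, qPoch_succ _ (x + 1), qPoch_succ' q x, qPoch_succ q 1, hsplit]
  field_simp
  ring

lemma qRisingChoose_natCast_add {q : ℝ} (hq₀ : 0 < q) (hq₁ : q < 1) (m n : ℕ) (y : ℝ) :
    qRisingChoose q (m + y) n =
      ∑ p ∈ antidiagonal n, q ^ (p.1 * y) * qRisingChoose q m p.1 * qRisingChoose q y p.2 := by
  induction m generalizing n with
  | zero =>
    cases n with
    | zero => simp
    | succ n => simp [Nat.sum_antidiagonal_succ, qRisingChoose_zero_succ]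
  | succ m ihm =>
    induction n with
    | zero => simp
    | succ n ihn =>
      have hpascal (a : ℕ) : qRisingChoose q ((m + 1 : ℕ) : ℝ) (a + 1) =
          qRisingChoose q m (a + 1) + q ^ (m : ℝ) * qRisingChoose q ((m + 1 : ℕ) : ℝ) a := by
        push_cast
        exact qRisingChoose_succ_succ hq₀ hq₁ m a
      have hexp (a : ℕ) :
          q ^ (((a + 1 : ℕ) : ℝ) * y) * q ^ (m : ℝ) = q ^ (m + y) * q ^ (a * y) := by
        rw [← Real.rpow_add hq₀, ← Real.rpow_add hq₀]
        push_cast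
        ring_nf
      calc qRisingChoose q ((m + 1 : ℕ) + y) (n + 1)
          = qRisingChoose q (m + y) (n + 1) +
              q ^ (m + y) * qRisingChoose q ((m + 1 : ℕ) + y) n := by
            rw [show ((m + 1 : ℕ) : ℝ) + y = m + y + 1 by push_cast; ring]
            exact qRisingChoose_succ_succ hq₀ hq₁ _ n
        _ = _ := by
          rw [ihm, ihn, Nat.sum_antidiagonal_succ, Nat.sum_antidiagonal_succ, mul_sum, add_assoc,
            ← sum_add_distrib]
          simp only [hpascal, qRisingChoose_zero_right]
          congr 1
          refine sum_congr rfl fun p _ => ?_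
          linear_combination
            -(qRisingChoose q ((m + 1 : ℕ) : ℝ) p.1 * qRisingChoose q y p.2) * hexp p.1

section Polynomial

open Polynomial

noncomputable def qPochPoly (q c : ℝ) (r : ℕ) : ℝ[X] := ∏ i ∈ range r, (1 - C (q ^ (c + i)) * X)

lemma eval_qPochPoly {q : ℝ} (hq₀ : 0 < q) (c x : ℝ) (r : ℕ) :
    (qPochPoly q c r).eval (q ^ x) = qPoch q (x + c) r := by
  simp only [qPochPoly, qPoch, eval_prod, eval_sub, eval_one, eval_mul, eval_C, eval_X,
    ← Real.rpow_add hq₀]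
  exact prod_congr rfl fun i _ => by ring_nf

theorem qRisingChoose_add {q : ℝ} (hq₀ : 0 < q) (hq₁ : q < 1) (x y : ℝ) (n : ℕ) :
    qRisingChoose q (x + y) n =
      ∑ p ∈ antidiagonal n, q ^ (p.1 * y) * qRisingChoose q x p.1 * qRisingChoose q y p.2 := by
  set L : ℝ[X] := C (qPoch q 1 n)⁻¹ * qPochPoly q y n
  set R : ℝ[X] := ∑ p ∈ antidiagonal n,
    C (q ^ (p.1 * y) * qRisingChoose q y p.2 / qPoch q 1 p.1) * qPochPoly q 0 p.1
  have hL (z : ℝ) : L.eval (q ^ z) = qRisingChoose q (z + y) n := by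
    simp only [L, eval_mul, eval_C, eval_qPochPoly hq₀, qRisingChoose]
    ring
  have hR (z : ℝ) : R.eval (q ^ z) =
      ∑ p ∈ antidiagonal n, q ^ (p.1 * y) * qRisingChoose q z p.1 * qRisingChoose q y p.2 := by
    simp only [R, eval_finsetSum, eval_mul, eval_C, eval_qPochPoly hq₀, add_zero, qRisingChoose]
    refine sum_congr rfl fun p _ => ?_
    ring
  have hLR : L = R := by
    refine eq_of_infinite_eval_eq L R <| Set.infinite_of_injective_forall_mem
      (pow_right_injective₀ hq₀ hq₁.ne) fun m => ?_
    simp only [Set.mem_ofPred_eq, ← Real.rpow_natCast, hL, hR, qRisingChoose_natCast_add hq₀ hq₁]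
  simpa only [hL, hR] using congrArg (eval (q ^ x)) hLR

end Polynomial

lemma Finset.Nat.sum_antidiagonalTuple_succ {M : Type*} [AddCommMonoid M] (k n : ℕ)
    (f : (Fin (k + 1) → ℕ) → M) :
    ∑ ρ ∈ Nat.antidiagonalTuple (k + 1) n, f ρ =
      ∑ p ∈ antidiagonal n, ∑ r ∈ Nat.antidiagonalTuple k p.2, f (Fin.cons p.1 r) := by
  rw [sum_sigma']
  refine sum_nbij' (fun ρ => ⟨(ρ 0, ∑ i, Fin.tail ρ i), Fin.tail ρ⟩)
    (fun s => Fin.cons s.1.1 s.2) ?_ ?_ ?_ ?_ ?_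
  · intro ρ hρ
    simp_all [mem_antidiagonalTuple, Fin.sum_univ_succ, Fin.tail]
  · rintro ⟨⟨a, b⟩, r⟩ h
    simp_all [mem_antidiagonalTuple, Fin.sum_cons]
  · intro ρ _
    exact Fin.cons_self_tail ρ
  · rintro ⟨⟨a, b⟩, r⟩ h
    simp_all [mem_antidiagonalTuple]
  · intro ρ _
    simp

lemma sum_cons_mul_sum_Ioi {k : ℕ} (a : ℕ) (r : Fin k → ℕ) (x : Fin (k + 1) → ℝ) :
    ∑ j, ((Fin.cons a r : Fin (k + 1) → ℕ) j : ℝ) * ∑ i ∈ Ioi j, x i =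
      a * ∑ i : Fin k, x i.succ + ∑ j, (r j : ℝ) * ∑ i ∈ Ioi j, x i.succ := by
  simp [Fin.sum_univ_succ]

theorem qRisingChoose_sum {q : ℝ} (hq₀ : 0 < q) (hq₁ : q < 1) (k n : ℕ) (x : Fin (k + 1) → ℝ) :
    qRisingChoose q (∑ i, x i) n =
      ∑ ρ ∈ Nat.antidiagonalTuple (k + 1) n,
        q ^ (∑ j, (ρ j : ℝ) * ∑ i ∈ Ioi j, x i) * ∏ j, qRisingChoose q (x j) (ρ j) := by
  induction k generalizing n with
  | zero => simp
  | succ k ih =>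
    rw [Fin.sum_univ_succ, qRisingChoose_add hq₀ hq₁, Nat.sum_antidiagonalTuple_succ]
    refine sum_congr rfl fun p _ => ?_
    rw [ih, mul_sum]
    refine sum_congr rfl fun r _ => ?_
    rw [sum_cons_mul_sum_Ioi, Real.rpow_add hq₀, Fin.prod_univ_succ (n := k + 1)]
    simp only [Fin.cons_zero, Fin.cons_succ]
    ring

lemma Finset.Nat.sum_antidiagonalTuple_succ_eq_sum_snoc {M : Type*} [AddCommMonoid M] (k n : ℕ)
    (f : (Fin (k + 1) → ℕ) → M) :
    ∑ ρ ∈ Nat.antidiagonalTuple (k + 1) n, f ρ =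
      ∑ r ∈ (Fintype.piFinset fun _ : Fin k => range (n + 1)).filter (fun r => ∑ j, r j ≤ n),
        f (Fin.snoc r (n - ∑ i, r i)) := by
  have hsum (ρ : Fin (k + 1) → ℕ) (hρ : ρ ∈ Nat.antidiagonalTuple (k + 1) n) :
      ∑ i, Fin.init ρ i + ρ (Fin.last k) = n := by
    simpa [mem_antidiagonalTuple, Fin.sum_univ_castSucc, Fin.init] using hρ
  refine sum_nbij' Fin.init (fun r => Fin.snoc r (n - ∑ i, r i)) ?_ ?_ ?_ ?_ ?_
  · intro ρ hρ
    have := hsum ρ hρ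
    simp only [mem_filter, Fintype.mem_piFinset, mem_range]
    exact ⟨fun i => (single_le_sum (fun _ _ => Nat.zero_le _) (mem_univ i)).trans_lt (by omega),
      by omega⟩
  · intro r hr
    simp_all [mem_antidiagonalTuple, Fin.sum_univ_castSucc]
  · intro ρ hρ
    simp only [← hsum ρ hρ, Nat.add_sub_cancel_left, Fin.snoc_init_self]
  · intro r _
    simp
  · intro ρ hρ
    simp only [← hsum ρ hρ, Nat.add_sub_cancel_left, Fin.snoc_init_self]

lemma sum_mul_sum_Ici_comm {ι R : Type*} [Fintype ι] [Preorder ι] [LocallyFiniteOrderTop ι]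
    [LocallyFiniteOrderBot ι] [CommSemiring R] (f g : ι → R) :
    ∑ j, f j * ∑ i ∈ Ici j, g i = ∑ i, g i * ∑ j ∈ Iic i, f j := by
  simp only [mul_sum]
  rw [sum_comm' (t' := univ) (s' := Iic) (by simp)]
  simp only [mul_comm]

lemma sum_mul_sum_filter_lt_eq_sum_snoc {k : ℕ} (r : Fin k → ℕ) (c : ℕ) (x : Fin (k + 1) → ℝ) :
    ∑ j : Fin k, (r j : ℝ) * ∑ i ∈ univ.filter fun i : Fin (k + 1) => (j : ℕ) < i, x i =
      ∑ j, ((Fin.snoc r c : Fin (k + 1) → ℕ) j : ℝ) * ∑ i ∈ Ioi j, x i := by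
  have hfilter (j : Fin k) : univ.filter (fun i : Fin (k + 1) => (j : ℕ) < i) = Ioi j.castSucc := by
    ext i
    simp [Fin.lt_def]
  have hlast : Ioi (Fin.last k) = ∅ := by
    ext i
    simp [(Fin.le_last i).not_gt]
  simp [Fin.sum_univ_castSucc, hfilter, hlast]

section Deformed

variable {τ₁ τ₂ : ℝ}

lemma dnum_eq (hτ₁ : 0 < τ₁) (hτ₂ : 0 ≤ τ₂) (z : ℝ) :
    dnum τ₁ τ₂ z = τ₁ ^ z * (1 - (τ₂ / τ₁) ^ z) / (τ₁ - τ₂) := by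
  rw [dnum, Real.div_rpow hτ₂ hτ₁.le, mul_sub, mul_div_cancel₀ _ (by positivity), mul_one]

lemma dnum_div_dnum (hτ₁ : 0 < τ₁) (hτ₂ : 0 ≤ τ₂) (hne : τ₁ ≠ τ₂) (z w : ℝ) :
    dnum τ₁ τ₂ z / dnum τ₁ τ₂ w = τ₁ ^ (z - w) * ((1 - (τ₂ / τ₁) ^ z) / (1 - (τ₂ / τ₁) ^ w)) := by
  rw [dnum_eq hτ₁ hτ₂, dnum_eq hτ₁ hτ₂, div_div_div_cancel_right₀ (sub_ne_zero.2 hne),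
    mul_div_mul_comm, Real.rpow_sub hτ₁]

lemma dfall_add_sub_one (x : ℝ) (r : ℕ) :
    dfall τ₁ τ₂ (x + r - 1) r = ∏ i ∈ range r, dnum τ₁ τ₂ (x + i) := by
  rw [dfall, ← prod_range_reflect]
  refine prod_congr rfl fun i hi => ?_
  rw [Nat.cast_sub (by grind), Nat.cast_sub (by grind)]
  push_cast
  ring_nf

lemma dbinom_add_sub_one (hτ₁ : 0 < τ₁) (hτ₂ : 0 ≤ τ₂) (hne : τ₁ ≠ τ₂) (x : ℝ) (r : ℕ) :
    dbinom τ₁ τ₂ (x + r - 1) r = τ₁ ^ (r * (x - 1)) * qRisingChoose (τ₂ / τ₁) x r := by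
  rw [dbinom, dfall_add_sub_one, dfac, ← prod_div_distrib]
  simp only [dnum_div_dnum hτ₁ hτ₂ hne, prod_mul_distrib, prod_div_distrib,
    show ∀ i : ℕ, x + i - (i + 1) = x - 1 by intro i; ring, prod_const, card_range]
  rw [mul_comm (r : ℝ), Real.rpow_mul_natCast hτ₁.le, qRisingChoose, qPoch, qPoch]
  simp only [add_comm (1 : ℝ)]

end Deformed

lemma cauchy_exponent_eq {k n : ℕ} (r : Fin k → ℕ) (hr : ∑ j, r j ≤ n) (x : Fin (k + 1) → ℝ) :
    ∑ j : Fin k, x j.castSucc * (n - ((∑ i ∈ Iic j, r i : ℕ) : ℝ)) +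
        ∑ j, ((Fin.snoc r (n - ∑ i, r i) : Fin (k + 1) → ℕ) j : ℝ) * ∑ i ∈ Ioi j, x i +
        ∑ j, ((Fin.snoc r (n - ∑ i, r i) : Fin (k + 1) → ℕ) j : ℝ) * (x j - 1) =
      n * (∑ j, x j - 1) := by
  set ρ : Fin (k + 1) → ℕ := Fin.snoc r (n - ∑ i, r i)
  have hρ : ∑ j, (ρ j : ℝ) = n := by
    simp [ρ, Fin.sum_univ_castSucc, Nat.cast_sub hr]
  have hprefix : ∑ j : Fin k, x j.castSucc * (n - ((∑ i ∈ Iic j, r i : ℕ) : ℝ)) =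
      ∑ j, x j * (n - ∑ i ∈ Iic j, (ρ i : ℝ)) := by
    have hlast : Iic (Fin.last k) = univ := by
      ext i
      simp [Fin.le_last]
    rw [Fin.sum_univ_castSucc (f := fun j => x j * (n - ∑ i ∈ Iic j, (ρ i : ℝ))), hlast, hρ,
      sub_self, mul_zero, add_zero]
    simp [ρ, Fin.sum_Iic_castSucc]
  have hswap := sum_mul_sum_Ici_comm (fun j => (ρ j : ℝ)) x
  simp only [← add_sum_Ioi_eq_sum_Ici, mul_add, sum_add_distrib] at hswap
  rw [hprefix]
  simp only [mul_sub, sum_sub_distrib, ← sum_mul, hρ, mul_one]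
  linear_combination hswap

theorem deformed_multivariate_cauchy_rising_general
    (τ₁ τ₂ : ℝ) (hτ₂ : 0 < τ₂) (hττ : τ₂ < τ₁)
    (n k : ℕ) (x : Fin (k + 1) → ℝ) :
    dbinom τ₁ τ₂ (∑ i, x i + n - 1) n =
      ∑ r ∈ (Fintype.piFinset fun _ : Fin k => Finset.range (n + 1)).filter
          (fun r => ∑ j, r j ≤ n),
        τ₁ ^ (∑ j : Fin k, x j.castSucc *
            ((n : ℝ) - ((∑ i ∈ Finset.Iic j, r i : ℕ) : ℝ))) *
          τ₂ ^ (∑ j : Fin k, (r j : ℝ) *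
              (∑ i ∈ Finset.univ.filter fun i : Fin (k + 1) => (j : ℕ) < (i : ℕ), x i)) *
          ∏ j : Fin (k + 1),
            dbinom τ₁ τ₂ (x j + ((Fin.snoc r (n - ∑ i, r i) : Fin (k + 1) → ℕ) j : ℝ) - 1)
              ((Fin.snoc r (n - ∑ i, r i) : Fin (k + 1) → ℕ) j) := by
  have hτ₁ : 0 < τ₁ := hτ₂.trans hττ
  have hq₀ : 0 < τ₂ / τ₁ := div_pos hτ₂ hτ₁
  have hq₁ : τ₂ / τ₁ < 1 := (div_lt_one hτ₁).2 hττ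
  have hbinom := dbinom_add_sub_one hτ₁ hτ₂.le hττ.ne'
  have hτ₂_rpow (e : ℝ) : τ₂ ^ e = τ₁ ^ e * (τ₂ / τ₁) ^ e := by
    rw [← Real.mul_rpow hτ₁.le hq₀.le, mul_div_cancel₀ _ hτ₁.ne']
  rw [hbinom, qRisingChoose_sum hq₀ hq₁, mul_sum, Nat.sum_antidiagonalTuple_succ_eq_sum_snoc]
  refine sum_congr rfl fun r hr => ?_
  rw [sum_mul_sum_filter_lt_eq_sum_snoc r (n - ∑ i, r i),
    ← cauchy_exponent_eq r (mem_filter.1 hr).2 x]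
  simp only [hτ₂_rpow, hbinom, prod_mul_distrib, ← Real.rpow_sum_of_pos hτ₁, Real.rpow_add hτ₁]
  ring

/-- Multivariate deformed Cauchy formula in rising-binomial form:
`C(x₁+⋯+x_{k+1}+n−1, n) = Σ τ₁^{Σ_j x_j(n−s_j)} τ₂^{Σ_j r_j z_j}
  Π_j C(x_j+r_j−1, r_j)`, summed over tuples `(r₁,…,r_k)` with `r₁+⋯+r_k ≤ n`,
where `s_j = r₁+⋯+r_j`, `r_{k+1} = n − s_k` and `z_j = x_{j+1}+⋯+x_{k+1}`. -/
theorem deformed_multivariate_cauchy_rising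
    (τ₁ τ₂ : ℝ) (hτ₂ : 0 < τ₂) (hττ : τ₂ < τ₁)
    (n k : ℕ) (hk : 1 ≤ k) (x : Fin (k + 1) → ℝ) :
    dbinom τ₁ τ₂ (∑ i, x i + n - 1) n =
      ∑ r ∈ (Fintype.piFinset fun _ : Fin k => Finset.range (n + 1)).filter
          (fun r => ∑ j, r j ≤ n),
        τ₁ ^ (∑ j : Fin k, x j.castSucc *
            ((n : ℝ) - ((∑ i ∈ Finset.Iic j, r i : ℕ) : ℝ))) *
          τ₂ ^ (∑ j : Fin k, (r j : ℝ) *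
              (∑ i ∈ Finset.univ.filter fun i : Fin (k + 1) => (j : ℕ) < (i : ℕ), x i)) *
          ∏ j : Fin (k + 1),
            dbinom τ₁ τ₂ (x j + ((Fin.snoc r (n - ∑ i, r i) : Fin (k + 1) → ℕ) j : ℝ) - 1)
              ((Fin.snoc r (n - ∑ i, r i) : Fin (k + 1) → ℕ) j) :=
  deformed_multivariate_cauchy_rising_general τ₁ τ₂ hτ₂ hττ n k x
end
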